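/- Let a>0, c>0, N>0 and let n≥0 be an integer. Assume p_n, q_n exist for the weight ω_{n,N} and p_{n+1}, q_{n+1} exist for the weight ω_{n+1,N}, and that β_n := (1/(2πi))·∮_Γ p_n(w)·ω_{n,N}(w)·w^{−1} dw ≠ 0. Then p_{n+1}(0) = b_n/β_n and q_{n+1}(0) = −1/β_n, where b_n := −(1/(2πi))·∮_Γ p_n(w)·w^n·ω_{n,N}(w) dw. (In the paper's notation these are the recurrence relations α_{n+1} = b_n/β_n and γ_{n+1} = −1/β_n.) -/

import Mathlib

/-- The contour weight `ω_{n,N}(w) = w^{-n} e^{-Naw} exp(Nc Log(1-a/w))`. -/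
noncomputable def omegaW (a c N : ℝ) (n : ℕ) (w : ℂ) : ℂ :=
  w ^ (-(n : ℤ)) * Complex.exp (-((N * a : ℝ) : ℂ) * w)
    * Complex.exp (((N * c : ℝ) : ℂ) * Complex.log (1 - (a : ℂ) / w))

/-- `P` is the monic degree-`n` orthogonal polynomial for the weight `ω_{n,N}`
on the circle `|w| = R`. -/
def IsPn (a c N R : ℝ) (n : ℕ) (P : Polynomial ℂ) : Prop :=
  P.Monic ∧ P.natDegree = n ∧
    ∀ k : ℕ, k < n →
      circleIntegral (fun w => P.eval w * w ^ k * omegaW a c N n w) 0 R = 0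

/-- `Q` is the second-kind polynomial of degree `≤ n-1` for the weight `ω_{n,N}`
on the circle `|w| = R`. -/
def IsQn (a c N R : ℝ) (n : ℕ) (Q : Polynomial ℂ) : Prop :=
  Q.degree < (n : WithBot ℕ) ∧
    (∀ k : ℕ, k + 1 < n →
      circleIntegral (fun w => Q.eval w * w ^ k * omegaW a c N n w) 0 R = 0) ∧
    (-1 / (2 * (Real.pi : ℂ) * Complex.I))
      * circleIntegral (fun w => Q.eval w * w ^ ((n : ℤ) - 1) * omegaW a c N n w) 0 R = 1

/-- `β_n = (1/(2πi)) ∮ p_n(w) ω_{n,N}(w) w^{-1} dw`. -/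
noncomputable def betaN (a c N R : ℝ) (n : ℕ) (P : Polynomial ℂ) : ℂ :=
  (1 / (2 * (Real.pi : ℂ) * Complex.I))
    * circleIntegral (fun w => P.eval w * omegaW a c N n w / w) 0 R

/-- `b_n = -(1/(2πi)) ∮ p_n(w) w^n ω_{n,N}(w) dw`. -/
noncomputable def bSmallN (a c N R : ℝ) (n : ℕ) (P : Polynomial ℂ) : ℂ :=
  -((1 / (2 * (Real.pi : ℂ) * Complex.I))
    * circleIntegral (fun w => P.eval w * w ^ n * omegaW a c N n w) 0 R)

/-!
Write `⟨f, g⟩ₙ = ∮ f g ω_{n,N}`. Since `ω_{n+1,N} = ω_{n,N} / w`, splitting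
`s(w) = w · (s.divX)(w) + s(0)` gives `⟨s, p_n⟩_{n+1} = ⟨s.divX, p_n⟩ₙ + s(0) · 2πi β_n`.
For `s = p_{n+1}` the left side vanishes by orthogonality, and
`⟨p_{n+1}.divX, p_n⟩ₙ = ⟨w^n, p_n⟩ₙ = -2πi b_n` because `p_{n+1}.divX` is monic of degree `n`.
For `s = q_{n+1}` the left side is `⟨q_{n+1}, w^n⟩_{n+1} = -2πi` by the normalisation of
`q_{n+1}`, while `⟨q_{n+1}.divX, p_n⟩ₙ = 0` since `q_{n+1}.divX` has degree `< n`.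
-/

open Polynomial Metric

namespace Polynomial

theorem IsMonicOfDegree.degree_sub_X_pow_lt {R : Type*} [Ring R] [Nontrivial R] {p : R[X]} {n : ℕ}
    (hp : IsMonicOfDegree p n) : (p - X ^ n).degree < (n : WithBot ℕ) := by
  have hdeg : p.degree = n := by rw [degree_eq_natDegree hp.ne_zero, hp.natDegree_eq]
  rw [← hdeg]
  exact degree_sub_lt_left (by rw [hdeg, degree_X_pow]) hp.ne_zero
    (by rw [hp.leadingCoeff_eq, leadingCoeff_X_pow])

theorem IsMonicOfDegree.divX {R : Type*} [Semiring R] {p : R[X]} {n : ℕ}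
    (hp : IsMonicOfDegree p (n + 1)) : IsMonicOfDegree p.divX n := by
  have hnat : p.divX.natDegree = n := by
    rw [natDegree_divX_eq_natDegree_tsub_one, hp.natDegree_eq, Nat.add_sub_cancel]
  refine ⟨hnat, ?_⟩
  rw [Monic, leadingCoeff, hnat, coeff_divX, ← hp.natDegree_eq]
  exact hp.monic

theorem degree_divX_lt_of_degree_lt {R : Type*} [Semiring R] {p : R[X]} {n : ℕ}
    (hp : p.degree < (n + 1 : ℕ)) : p.divX.degree < n := by
  rw [degree_lt_iff_coeff_zero] at hp ⊢
  exact fun m hm => by rw [coeff_divX]; exact hp (m + 1) (by omega)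

end Polynomial

section Weight

variable {ω : ℂ → ℂ} {R : ℝ}

theorem circleIntegral_eval_mul_eval_mul_eq_zero_of_degree_lt (hR : 0 ≤ R)
    (hω : ContinuousOn ω (sphere 0 R)) {P S : ℂ[X]} {m : ℕ}
    (hP : ∀ k < m, (∮ w in C(0, R), P.eval w * w ^ k * ω w) = 0) (hS : S.degree < m) :
    (∮ w in C(0, R), P.eval w * S.eval w * ω w) = 0 := by
  rcases eq_or_ne S 0 with rfl | hS0
  · simp [circleIntegral]
  have hexpand : (fun w => P.eval w * S.eval w * ω w)
      = fun w => ∑ k ∈ Finset.range m, S.coeff k * (P.eval w * w ^ k * ω w) := by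
    funext w
    rw [eval_eq_sum_range' ((natDegree_lt_iff_degree_lt hS0).mpr hS), Finset.mul_sum,
      Finset.sum_mul]
    exact Finset.sum_congr rfl fun k _ => by ring
  rw [hexpand, circleIntegral.integral_fun_sum fun k _ =>
    ContinuousOn.circleIntegrable hR (by fun_prop)]
  exact Finset.sum_eq_zero fun k hk => by
    rw [circleIntegral.integral_const_mul, hP k (Finset.mem_range.mp hk), mul_zero]

theorem circleIntegral_eval_mul_eval_mul_of_isMonicOfDegree (hR : 0 ≤ R)
    (hω : ContinuousOn ω (sphere 0 R)) {P S : ℂ[X]} {n : ℕ}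
    (hP : ∀ k < n, (∮ w in C(0, R), P.eval w * w ^ k * ω w) = 0) (hS : IsMonicOfDegree S n) :
    (∮ w in C(0, R), P.eval w * S.eval w * ω w) = ∮ w in C(0, R), P.eval w * w ^ n * ω w := by
  rw [← sub_eq_zero, ← circleIntegral.integral_sub (ContinuousOn.circleIntegrable hR ?_)
    (ContinuousOn.circleIntegrable hR ?_)]
  · convert circleIntegral_eval_mul_eval_mul_eq_zero_of_degree_lt hR hω hP
      hS.degree_sub_X_pow_lt using 2
    funext w
    simp only [eval_sub, eval_pow, eval_X]
    ring
  all_goals fun_prop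

theorem circleIntegral_eval_mul_eval_mul_div (hR : 0 < R) (hω : ContinuousOn ω (sphere 0 R))
    (P S : ℂ[X]) :
    (∮ w in C(0, R), S.eval w * P.eval w * (ω w / w))
      = (∮ w in C(0, R), P.eval w * S.divX.eval w * ω w)
        + S.eval 0 * ∮ w in C(0, R), P.eval w * ω w / w := by
  rw [← circleIntegral.integral_const_mul, ← circleIntegral.integral_add
    (ContinuousOn.circleIntegrable hR.le ?_) (ContinuousOn.circleIntegrable hR.le ?_)]
  · refine circleIntegral.integral_congr hR.le fun w hw => ?_
    have hw0 : w ≠ 0 := ne_of_mem_sphere hw hR.ne'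
    have hsplit : S.eval w = w * S.divX.eval w + S.eval 0 := by
      conv_lhs => rw [← X_mul_divX_add S]
      simp only [eval_add, eval_mul, eval_X, eval_C, coeff_zero_eq_eval_zero]
    simp only [hsplit]
    field_simp
  all_goals fun_prop (disch := exact fun _ hw => ne_of_mem_sphere hw hR.ne')

end Weight

section OmegaW

variable {a c N R : ℝ}

theorem continuousOn_omegaW (ha : 0 < a) (hR : a < R) (n : ℕ) :
    ContinuousOn (omegaW a c N n) (sphere 0 R) := by
  intro w hw
  have hw0 : w ≠ 0 := ne_of_mem_sphere hw (ha.trans hR).ne'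
  have hslit : 1 - (a : ℂ) / w ∈ Complex.slitPlane := by
    refine Complex.mem_slitPlane_iff.mpr (Or.inl ?_)
    have hnorm : ‖(a : ℂ) / w‖ < 1 := by
      rw [norm_div, Complex.norm_of_nonneg ha.le, mem_sphere_zero_iff_norm.mp hw,
        div_lt_one (ha.trans hR)]
      exact hR
    have hre := (abs_le.mp (Complex.abs_re_le_norm ((a : ℂ) / w))).2
    simp only [Complex.sub_re, Complex.one_re]
    linarith
  refine ContinuousAt.continuousWithinAt ?_
  unfold omegaW
  have hlog : ContinuousAt (fun w : ℂ => Complex.log (1 - (a : ℂ) / w)) w :=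
    (continuousAt_const.sub (continuousAt_const.div continuousAt_id hw0)).clog hslit
  exact ((continuousAt_zpow₀ _ _ (Or.inl hw0)).mul (by fun_prop)).mul
    (Complex.continuous_exp.continuousAt.comp (continuousAt_const.mul hlog))

theorem omegaW_succ (n : ℕ) (w : ℂ) : omegaW a c N (n + 1) w = omegaW a c N n w / w := by
  rcases eq_or_ne w 0 with rfl | hw
  -- both sides vanish at `w = 0`, by the conventions `0 ^ (-k) = 0` and `x / 0 = 0`
  · rw [div_zero, omegaW, zero_zpow _ (by omega)]
    simp
  simp only [omegaW, Nat.cast_add, Nat.cast_one, neg_add, zpow_add₀ hw, zpow_neg_one]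
  ring

theorem circleIntegral_eval_mul_eval_mul_omegaW_succ (ha : 0 < a) (hR : a < R) (n : ℕ)
    (P S : ℂ[X]) :
    (∮ w in C(0, R), S.eval w * P.eval w * omegaW a c N (n + 1) w)
      = (∮ w in C(0, R), P.eval w * S.divX.eval w * omegaW a c N n w)
        + S.eval 0 * ∮ w in C(0, R), P.eval w * omegaW a c N n w / w := by
  simp only [omegaW_succ]
  exact circleIntegral_eval_mul_eval_mul_div (ha.trans hR) (continuousOn_omegaW ha hR n) P S

theorem eval_zero_mul_betaN_of_isPn (ha : 0 < a) (hR : a < R) {n : ℕ} {pn pn1 : ℂ[X]}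
    (hpn : IsPn a c N R n pn) (hpn1 : IsPn a c N R (n + 1) pn1) :
    pn1.eval 0 * betaN a c N R n pn = bSmallN a c N R n pn := by
  obtain ⟨hmon, hdeg, horth⟩ := hpn
  obtain ⟨hmon1, hdeg1, horth1⟩ := hpn1
  have hR0 : 0 ≤ R := (ha.trans hR).le
  have hdeg_lt : pn.degree < (n + 1 : ℕ) := by
    rw [degree_eq_natDegree hmon.ne_zero, hdeg]
    exact_mod_cast n.lt_succ_self
  have hzero : (∮ w in C(0, R), pn1.eval w * pn.eval w * omegaW a c N (n + 1) w) = 0 :=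
    circleIntegral_eval_mul_eval_mul_eq_zero_of_degree_lt hR0 (continuousOn_omegaW ha hR _)
      horth1 hdeg_lt
  rw [circleIntegral_eval_mul_eval_mul_omegaW_succ ha hR,
    circleIntegral_eval_mul_eval_mul_of_isMonicOfDegree hR0 (continuousOn_omegaW ha hR n) horth
      (IsMonicOfDegree.divX ⟨hdeg1, hmon1⟩)] at hzero
  unfold betaN bSmallN
  linear_combination (1 / (2 * (Real.pi : ℂ) * Complex.I)) * hzero

theorem eval_zero_mul_betaN_of_isQn (ha : 0 < a) (hR : a < R) {n : ℕ} {pn qn1 : ℂ[X]}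
    (hpn : IsPn a c N R n pn) (hqn1 : IsQn a c N R (n + 1) qn1) :
    qn1.eval 0 * betaN a c N R n pn = -1 := by
  obtain ⟨hmon, hdeg, horth⟩ := hpn
  obtain ⟨hdeg1, horth1, hnorm⟩ := hqn1
  have hR0 : 0 ≤ R := (ha.trans hR).le
  have hpair := circleIntegral_eval_mul_eval_mul_of_isMonicOfDegree hR0
    (continuousOn_omegaW ha hR (n + 1)) (fun k hk => horth1 k (by omega)) ⟨hdeg, hmon⟩
  rw [circleIntegral_eval_mul_eval_mul_omegaW_succ ha hR,
    circleIntegral_eval_mul_eval_mul_eq_zero_of_degree_lt hR0 (continuousOn_omegaW ha hR n) horth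
      (degree_divX_lt_of_degree_lt hdeg1), zero_add] at hpair
  simp only [Nat.cast_add, Nat.cast_one, add_sub_cancel_right, zpow_natCast] at hnorm
  unfold betaN
  linear_combination (1 / (2 * (Real.pi : ℂ) * Complex.I)) * hpair - hnorm

end OmegaW

theorem statement18_general
    (a c N R : ℝ) (ha : 0 < a) (hR : a < R)
    (n : ℕ)
    (pn pn1 qn1 : Polynomial ℂ)
    (hpn : IsPn a c N R n pn)
    (hpn1 : IsPn a c N R (n + 1) pn1) (hqn1 : IsQn a c N R (n + 1) qn1)
    (hβ : betaN a c N R n pn ≠ 0) :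
    pn1.eval 0 = bSmallN a c N R n pn / betaN a c N R n pn
    ∧ qn1.eval 0 = -1 / betaN a c N R n pn := by
  rw [eq_div_iff hβ, eq_div_iff hβ]
  exact ⟨eval_zero_mul_betaN_of_isPn ha hR hpn hpn1, eval_zero_mul_betaN_of_isQn ha hR hpn hqn1⟩

/-- Recurrence relations `α_{n+1} = b_n/β_n` and `γ_{n+1} = -1/β_n`. -/
theorem statement18
    (a c N R : ℝ) (ha : 0 < a) (hc : 0 < c) (hN : 0 < N) (hR : a < R)
    (n : ℕ)
    (pn qn pn1 qn1 : Polynomial ℂ)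
    (hpn : IsPn a c N R n pn) (hqn : IsQn a c N R n qn)
    (hpn1 : IsPn a c N R (n + 1) pn1) (hqn1 : IsQn a c N R (n + 1) qn1)
    (hβ : betaN a c N R n pn ≠ 0) :
    pn1.eval 0 = bSmallN a c N R n pn / betaN a c N R n pn
    ∧ qn1.eval 0 = -1 / betaN a c N R n pn :=
  statement18_general a c N R ha hR n pn pn1 qn1 hpn hpn1 hqn1 hβ
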